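/- arXiv:1811.05376 — 5 statements merged into one kernel-verified Lean document; each statement's English description precedes it below -/
import Mathlib

section
/- The abelianization of G is the trivial group; equivalently, every group homomorphism from G to an abelian group is trivial. (This expresses that Σ(p_1,…,p_n) is an integral homology sphere.) -/
open scoped BigOperators

noncomputable def expDiag (z : ℂ) : Matrix.SpecialLinearGroup (Fin 2) ℂ :=
  ⟨!![Complex.exp z, 0; 0, Complex.exp (-z)], by
    simp [Matrix.det_fin_two_of, ← Complex.exp_add]⟩

/-- The relations of the presentation of the fundamental group of the Seifert fibered
homology sphere `Σ(p_1,…,p_n)`: the generator `none` is the central element `h`, and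
`some j` is the generator `x_j`. -/
def seifertRels (n : ℕ) (p q : Fin n → ℤ) : Set (FreeGroup (Option (Fin n))) :=
  {(List.ofFn fun j : Fin n => FreeGroup.of (some j)).prod} ∪
    (Set.range fun j : Fin n =>
      FreeGroup.of (some j) ^ p j * FreeGroup.of (none : Option (Fin n)) ^ (-q j)) ∪
    (Set.range fun j : Fin n =>
      FreeGroup.of (some j) * FreeGroup.of (none : Option (Fin n)) *
        (FreeGroup.of (some j))⁻¹ * (FreeGroup.of (none : Option (Fin n)))⁻¹)

/-- The fundamental group of `Σ(p_1,…,p_n)`. -/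
abbrev SeifertGroup (n : ℕ) (p q : Fin n → ℤ) : Type := PresentedGroup (seifertRels n p q)

/-- The generator `x_j` of the Seifert group. -/
def seifertX (n : ℕ) (p q : Fin n → ℤ) (j : Fin n) : SeifertGroup n p q :=
  PresentedGroup.of (some j)

/-- The set `L(p_1,…,p_n)`: `0 ≤ l_1 ≤ p_1`, `0 ≤ l_j ≤ (p_j − 1)/2` for `j ≥ 2`, and
`l_j ≠ 0` for at least three indices. -/
def memL (n : ℕ) (hn : 0 < n) (p l : Fin n → ℤ) : Prop :=
  (0 ≤ l ⟨0, hn⟩ ∧ l ⟨0, hn⟩ ≤ p ⟨0, hn⟩) ∧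
    (∀ j : Fin n, j ≠ ⟨0, hn⟩ → 0 ≤ l j ∧ 2 * l j ≤ p j - 1) ∧
    3 ≤ Set.ncard {j : Fin n | l j ≠ 0}


private lemma zpow_finset_sum {A : Type*} [CommGroup A] {ι : Type*} (s : Finset ι)
    (c : ι → ℤ) (h : A) : h ^ (∑ j ∈ s, c j) = ∏ j ∈ s, h ^ c j := by
  induction s using Finset.cons_induction with
  | empty => simp
  | cons a s ha ih => rw [Finset.sum_cons, Finset.prod_cons, zpow_add, ih]

private lemma key (n : ℕ) (p q : Fin n → ℤ)
    (hpcop : ∀ i j : Fin n, i ≠ j → IsCoprime (p i) (p j))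
    (hsum : ∑ j, q j * ∏ i ∈ Finset.univ.erase j, p i = 1)
    (A : Type*) [CommGroup A] (x : Fin n → A) (h : A)
    (h1 : ∏ j, x j = 1) (h2 : ∀ j, x j ^ p j = h ^ q j) :
    h = 1 ∧ ∀ j, x j = 1 := by
  set P : Fin n → ℤ := fun j => ∏ i ∈ Finset.univ.erase j, p i with hP
  have hPtot : ∀ j, p j * P j = ∏ i, p i := fun j =>
    Finset.mul_prod_erase Finset.univ p (Finset.mem_univ j)
  have hh : h = 1 := by
    calc h = h ^ (∑ j, q j * P j) := by rw [hsum, zpow_one]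
    _ = ∏ j, (x j) ^ (p j * P j) := by
        rw [zpow_finset_sum]
        refine Finset.prod_congr rfl fun j _ => ?_
        rw [zpow_mul, ← h2 j, ← zpow_mul]
    _ = (∏ j, x j) ^ (∏ i, p i) := by
        rw [← Finset.prod_zpow]
        exact Finset.prod_congr rfl fun j _ => by rw [hPtot j]
    _ = 1 := by rw [h1, one_zpow]
  refine ⟨hh, fun j => ?_⟩
  have hxp : ∀ k, x k ^ p k = 1 := fun k => by rw [h2 k, hh, one_zpow]
  have hxP : x j ^ P j = 1 := by
    have : ∏ k, x k ^ P j = 1 := by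
      rw [Finset.prod_zpow, h1, one_zpow]
    rw [← this]
    refine (Finset.prod_eq_single (f := fun k => x k ^ P j) j (fun k _ hk => ?_) (fun hj => absurd (Finset.mem_univ j) hj)).symm
    obtain ⟨c, hc⟩ : p k ∣ P j :=
      Finset.dvd_prod_of_mem p (Finset.mem_erase.2 ⟨hk, Finset.mem_univ k⟩)
    simp only [hc, zpow_mul, hxp k, one_zpow]
  have hcop : IsCoprime (p j) (P j) :=
    IsCoprime.prod_right fun i hi => hpcop j i (Ne.symm (Finset.ne_of_mem_erase hi))
  obtain ⟨a, b, hab⟩ := hcop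
  calc x j = x j ^ (a * p j + b * P j) := by rw [hab, zpow_one]
  _ = (x j ^ p j) ^ a * (x j ^ P j) ^ b := by
      rw [zpow_add, mul_comm a, mul_comm b, zpow_mul, zpow_mul]
  _ = 1 := by rw [hxp j, hxP, one_zpow, one_zpow, one_mul]


theorem statement3 (n : ℕ) (hn : 3 ≤ n) (p q : Fin n → ℤ)
    (hp2 : ∀ j, 2 ≤ p j)
    (hpcop : ∀ i j : Fin n, i ≠ j → IsCoprime (p i) (p j))
    (hpodd : ∀ j : Fin n, j ≠ ⟨0, by omega⟩ → Odd (p j))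
    (hqcop : ∀ j, IsCoprime (p j) (q j))
    (hq1odd : Odd (q ⟨0, by omega⟩))
    (hqeven : ∀ j : Fin n, j ≠ ⟨0, by omega⟩ → Even (q j))
    (hsum : ∑ j, q j * ∏ i ∈ Finset.univ.erase j, p i = 1) :
    Subsingleton (Abelianization (SeifertGroup n p q)) ∧
      ∀ (A : Type) [CommGroup A] (f : SeifertGroup n p q →* A), f = 1 := by
  have main : ∀ (A : Type) [CommGroup A] (f : SeifertGroup n p q →* A), f = 1 := by
    intro A _ f
    set g : FreeGroup (Option (Fin n)) →* A :=
      f.comp (PresentedGroup.mk (seifertRels n p q)) with hg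
    set x : Fin n → A := fun j => g (FreeGroup.of (some j)) with hx
    set h : A := g (FreeGroup.of none) with hh
    have hrel : ∀ r ∈ seifertRels n p q, g r = 1 := by
      intro r hr
      have : PresentedGroup.mk (seifertRels n p q) r = 1 :=
        (QuotientGroup.eq_one_iff r).mpr (Subgroup.subset_normalClosure hr)
      rw [hg, MonoidHom.comp_apply, this, map_one]
    have h1 : ∏ j, x j = 1 := by
      have := hrel _ (Or.inl (Or.inl rfl))
      rw [map_list_prod, List.map_ofFn] at this
      rw [← this, ← List.prod_ofFn]
      rfl
    have h2 : ∀ j, x j ^ p j = h ^ q j := by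
      intro j
      have := hrel _ (Or.inl (Or.inr ⟨j, rfl⟩))
      rw [map_mul, map_zpow, map_zpow, zpow_neg] at this
      exact (mul_inv_eq_one.mp this)
    obtain ⟨hhone, hxone⟩ := key n p q hpcop hsum A x h h1 h2
    refine PresentedGroup.ext fun y => ?_
    cases y with
    | none => exact hhone
    | some j => exact hxone j
  refine ⟨?_, main⟩
  have h1 : (Abelianization.of : SeifertGroup n p q →* _) = 1 :=
    main (Abelianization (SeifertGroup n p q)) Abelianization.of
  constructor
  intro a b
  induction a using QuotientGroup.induction_on with
  | H a =>
  induction b using QuotientGroup.induction_on with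
  | H b =>
  show Abelianization.of a = Abelianization.of b
  rw [h1]
  rfl
end

section
/- Assume P is even. Then for every y ∈ ℂ with sinh(y/2) ≠ 0, F(y + 2πiP) = −F(y). -/
open scoped BigOperators

lemma cos_int_pi (m : ℤ) : Complex.cos ((m : ℂ) * Real.pi) = (-1 : ℂ) ^ m := by
  have h := Real.cos_int_mul_pi_sub 0 m
  simp only [sub_zero, Real.cos_zero, mul_one] at h
  have : ((Real.cos ((m : ℝ) * Real.pi) : ℝ) : ℂ) = Complex.cos ((m : ℂ) * Real.pi) := by
    rw [Complex.ofReal_cos]; push_cast; ring_nf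
  rw [← this, h]; push_cast; ring
/-- The function `F(y) = (1/4) · (∏_j sinh(y/(2 p_j))) / sinh(y/2)^(n−2)`. -/
noncomputable def seifertF (n : ℕ) (p : Fin n → ℤ) (y : ℂ) : ℂ :=
  (1 / 4) * (∏ j, Complex.sinh (y / (2 * (p j : ℂ)))) / Complex.sinh (y / 2) ^ (n - 2)

lemma sinh_shift (m : ℤ) (x : ℂ) :
    Complex.sinh (x + (m : ℂ) * Real.pi * Complex.I) = (-1 : ℂ) ^ m * Complex.sinh x := by
  rw [Complex.sinh_add, show (m:ℂ) * Real.pi * Complex.I = ((m:ℂ)*Real.pi) * Complex.I by ring,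
    Complex.cosh_mul_I, Complex.sinh_mul_I, cos_int_pi]
  have : Complex.sin ((m : ℂ) * Real.pi) = 0 := Complex.sin_int_mul_pi m
  rw [this]; ring

theorem statement5 (n : ℕ) (hn : 3 ≤ n) (p : Fin n → ℤ)
    (hp2 : ∀ j, 2 ≤ p j)
    (hpcop : ∀ i j : Fin n, i ≠ j → IsCoprime (p i) (p j))
    (hPeven : Even (∏ j, p j)) :
    ∀ y : ℂ, Complex.sinh (y / 2) ≠ 0 →
      seifertF n p (y + 2 * (Real.pi : ℂ) * Complex.I * ((∏ j, p j : ℤ) : ℂ)) =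
        - seifertF n p y := by
  intro y hy
  set P : ℤ := ∏ j, p j with hP
  have hpne : ∀ j, (p j : ℂ) ≠ 0 := fun j => by
    have := hp2 j; exact_mod_cast (by omega : (p j) ≠ 0)
  have hpdvd : ∀ j, p j ∣ P := fun j => Finset.dvd_prod_of_mem p (Finset.mem_univ j)
  set q : Fin n → ℤ := fun j => P / p j with hq
  have hpq : ∀ j, p j * q j = P := fun j => Int.mul_ediv_cancel' (hpdvd j)
  -- there is an even p j0
  obtain ⟨j0, -, hj0dvd⟩ := Int.prime_two.exists_mem_finset_dvd hPeven.two_dvd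
  have hj0even : Even (p j0) := even_iff_two_dvd.2 hj0dvd
  -- q j is even for j ≠ j0
  have hqeven : ∀ j, j ≠ j0 → Even (q j) := by
    intro j hj
    have hcop : IsCoprime (p j0) (p j) := hpcop j0 j (Ne.symm hj)
    have : p j0 ∣ P := hpdvd j0
    rw [← hpq j] at this
    have h2 : p j0 ∣ q j := hcop.dvd_of_dvd_mul_left this
    exact even_iff_two_dvd.2 (hj0even.two_dvd.trans h2)
  -- q j0 is odd
  have hqodd : Odd (q j0) := by
    have hqe : q j0 = ∏ i ∈ Finset.univ.erase j0, p i := by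
      have h1 : p j0 * q j0 = P := hpq j0
      have h2 : p j0 * ∏ i ∈ Finset.univ.erase j0, p i = P :=
        Finset.mul_prod_erase Finset.univ p (Finset.mem_univ j0)
      exact mul_left_cancel₀ (by have := hp2 j0; omega) (h1.trans h2.symm)
    rw [Int.not_even_iff_odd.symm, hqe, even_iff_two_dvd]
    intro hdvd
    obtain ⟨i, hi, hdi⟩ := Int.prime_two.exists_mem_finset_dvd hdvd
    have hine : i ≠ j0 := (Finset.mem_erase.1 hi).1
    have hcop := hpcop i j0 hine
    have : IsUnit (2 : ℤ) := hcop.isUnit_of_dvd' hdi hj0dvd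
    exact absurd this (by decide)
  -- product of signs is -1
  have hsign : (∏ j, (-1 : ℂ) ^ (q j)) = -1 := by
    rw [← Finset.mul_prod_erase Finset.univ _ (Finset.mem_univ j0), hqodd.neg_one_zpow,
      Finset.prod_eq_one fun i hi => (hqeven i (Finset.mem_erase.1 hi).1).neg_one_zpow]
    ring
  -- rewrite the numerator product
  have hnum : (∏ j, Complex.sinh ((y + 2 * (Real.pi : ℂ) * Complex.I * (P : ℂ)) / (2 * (p j : ℂ))))
      = - ∏ j, Complex.sinh (y / (2 * (p j : ℂ))) := by
    have harg : ∀ j, (y + 2 * (Real.pi : ℂ) * Complex.I * (P : ℂ)) / (2 * (p j : ℂ))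
        = y / (2 * (p j : ℂ)) + (q j : ℂ) * Real.pi * Complex.I := by
      intro j
      have hPc : (p j : ℂ) * (q j : ℂ) = (P : ℂ) := by exact_mod_cast hpq j
      have h2p : (2 : ℂ) * (p j) ≠ 0 := by simpa using hpne j
      rw [div_eq_iff h2p, add_mul, div_mul_cancel₀ _ h2p]
      linear_combination (-2 * (Real.pi : ℂ) * Complex.I) * hPc
    calc (∏ j, Complex.sinh ((y + 2 * (Real.pi : ℂ) * Complex.I * (P : ℂ)) / (2 * (p j : ℂ))))
        = ∏ j, ((-1 : ℂ) ^ (q j) * Complex.sinh (y / (2 * (p j : ℂ)))) := by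
          refine Finset.prod_congr rfl fun j _ => ?_
          rw [harg j, sinh_shift]
      _ = - ∏ j, Complex.sinh (y / (2 * (p j : ℂ))) := by
          rw [Finset.prod_mul_distrib, hsign]; ring
  -- rewrite the denominator
  have hden : Complex.sinh ((y + 2 * (Real.pi : ℂ) * Complex.I * (P : ℂ)) / 2)
      = Complex.sinh (y / 2) := by
    have : (y + 2 * (Real.pi : ℂ) * Complex.I * (P : ℂ)) / 2
        = y / 2 + (P : ℂ) * Real.pi * Complex.I := by ring
    rw [this, sinh_shift, (by exact_mod_cast hPeven : Even P).neg_one_zpow, one_mul]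
  unfold seifertF
  rw [hnum, hden]
  ring
end

section
/- For every integer l ≥ 0, every real λ > 0 and every α ∈ ℂ with Re(α) > −1, the function t ↦ e^{−λt} t^α (log t)^l is integrable on (0, ∞), and ∫₀^∞ e^{−λt} t^α (log t)^l dt equals the l-th complex derivative at a = α of the function a ↦ Γ(a + 1) · λ^{−a−1} (holomorphic for Re(a) > −1), where t^a = exp(a · log t), λ^{−a−1} = exp(−(a+1) · log λ), log is the real logarithm, and Γ is the Gamma function. -/
/-!
The integral is the Mellin transform at `s = α + 1` of `t ↦ (log t)^l e^{-λt}`. Differentiating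
a Mellin transform in `s` multiplies the integrand by `log t`, so it is the `l`-th derivative of
the Mellin transform of `t ↦ e^{-λt}`, which is `Γ(s) λ^{-s}` after the substitution `u = λt`.
-/

open MeasureTheory Set Filter Asymptotics Topology

section MellinGrowth

variable {E : Type*} [NormedAddCommGroup E] [NormedSpace ℂ E]

/-- The hypotheses of `mellin_hasDerivAt_of_isBigO_rpow`, under which the Mellin transform of `f`
converges and is holomorphic on the strip `b < re s < a`. -/
def HasMellinGrowth (f : ℝ → E) (b a : ℝ) : Prop :=
  LocallyIntegrableOn f (Ioi 0) ∧ f =O[atTop] (· ^ (-a)) ∧ f =O[𝓝[>] 0] (· ^ (-b))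

namespace HasMellinGrowth

variable {f : ℝ → E} {a b : ℝ}

theorem mellinConvergent (hf : HasMellinGrowth f b a) {s : ℂ} (hs : s.re ∈ Ioo b a) :
    MellinConvergent f s :=
  mellinConvergent_of_isBigO_rpow hf.1 hf.2.1 hs.2 hf.2.2 hs.1

theorem hasDerivAt_mellin (hf : HasMellinGrowth f b a) {s : ℂ} (hs : s.re ∈ Ioo b a) :
    HasDerivAt (mellin f) (mellin (fun t => Real.log t • f t) s) s :=
  (mellin_hasDerivAt_of_isBigO_rpow hf.1 hf.2.1 hs.2 hf.2.2 hs.1).2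

theorem log_smul (hf : HasMellinGrowth f b a) {a' b' : ℝ} (ha : a' < a) (hb : b < b') :
    HasMellinGrowth (fun t => Real.log t • f t) b' a' :=
  ⟨hf.1.continuousOn_smul isOpen_Ioi.isLocallyClosed
      (Real.continuousOn_log.mono fun _ ht => ne_of_gt ht),
    isBigO_rpow_top_log_smul ha hf.2.1, isBigO_rpow_zero_log_smul hb hf.2.2⟩

theorem mellinConvergent_log_pow_smul (k : ℕ) (hf : HasMellinGrowth f b a) {s : ℂ}
    (hs : s.re ∈ Ioo b a) : MellinConvergent (fun t => Real.log t ^ k • f t) s := by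
  induction k generalizing f a b with
  | zero => simpa using hf.mellinConvergent hs
  | succ k ih =>
    obtain ⟨b', hb, hb'⟩ := exists_between hs.1
    obtain ⟨a', ha', ha⟩ := exists_between hs.2
    simpa only [pow_succ, mul_smul] using ih (hf.log_smul ha hb) ⟨hb', ha'⟩

theorem iteratedDeriv_mellin (k : ℕ) (hf : HasMellinGrowth f b a) {s : ℂ}
    (hs : s.re ∈ Ioo b a) :
    iteratedDeriv k (mellin f) s = mellin (fun t => Real.log t ^ k • f t) s := by
  induction k generalizing f a b s with
  | zero => simp
  | succ k ih =>
    obtain ⟨b', hb, hb'⟩ := exists_between hs.1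
    obtain ⟨a', ha', ha⟩ := exists_between hs.2
    have hderiv : deriv (mellin f) =ᶠ[𝓝 s] mellin (fun t => Real.log t • f t) :=
      eventually_of_mem ((isOpen_Ioo.preimage Complex.continuous_re).mem_nhds hs)
        fun z hz => (hf.hasDerivAt_mellin hz).deriv
    rw [iteratedDeriv_succ', hderiv.iteratedDeriv_eq, ih (hf.log_smul ha hb) ⟨hb', ha'⟩]
    simp only [pow_succ, mul_smul]

end HasMellinGrowth

end MellinGrowth

theorem hasMellinGrowth_cexp_neg_mul {lam : ℝ} (hlam : 0 < lam) (a : ℝ) :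
    HasMellinGrowth (fun t : ℝ => Complex.exp (-(lam : ℂ) * t)) 0 a := by
  have hcont : Continuous fun t : ℝ => Complex.exp (-(lam : ℂ) * t) := by fun_prop
  refine ⟨hcont.continuousOn.locallyIntegrableOn measurableSet_Ioi, ?_, ?_⟩
  · refine IsBigO.trans ?_ (isLittleO_exp_neg_mul_rpow_atTop hlam (-a)).isBigO
    refine IsBigO.of_bound 1 (Eventually.of_forall fun t => ?_)
    simp [Complex.norm_exp]
  · simpa using ((hcont.tendsto 0).mono_left nhdsWithin_le_nhds).isBigO_one ℝ

theorem mellin_cexp_neg_mul {lam : ℝ} (hlam : 0 < lam) {s : ℂ} (hs : 0 < s.re) :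
    mellin (fun t : ℝ => Complex.exp (-(lam : ℂ) * t)) s =
      Complex.Gamma s * (lam : ℂ) ^ (-s) := by
  have h := mellin_comp_mul_left (fun x : ℝ => ((Real.exp (-x) : ℝ) : ℂ)) s hlam
  rw [← Complex.GammaIntegral_eq_mellin, ← Complex.Gamma_eq_integral hs] at h
  rw [mul_comm, ← smul_eq_mul, ← h]
  simp [neg_mul]

theorem statement9 (l : ℕ) (lam : ℝ) (hlam : 0 < lam) (α : ℂ) (hα : -1 < α.re) :
    MeasureTheory.IntegrableOn
      (fun t : ℝ =>
        Complex.exp (-(lam : ℂ) * (t : ℂ)) * (t : ℂ) ^ α * ((Real.log t : ℂ)) ^ l)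
      (Set.Ioi 0) ∧
    (∫ t in Set.Ioi (0 : ℝ),
        Complex.exp (-(lam : ℂ) * (t : ℂ)) * (t : ℂ) ^ α * ((Real.log t : ℂ)) ^ l) =
      iteratedDeriv l (fun a : ℂ => Complex.Gamma (a + 1) * (lam : ℂ) ^ (-(a + 1))) α := by
  set f : ℝ → ℂ := fun t => Complex.exp (-(lam : ℂ) * t)
  have hs : (α + 1).re ∈ Ioo 0 ((α + 1).re + 1) :=
    ⟨by simp only [Complex.add_re, Complex.one_re]; linarith, lt_add_one _⟩
  have hf := hasMellinGrowth_cexp_neg_mul hlam ((α + 1).re + 1)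
  have hintegrand :
      (fun t : ℝ => Complex.exp (-(lam : ℂ) * t) * (t : ℂ) ^ α * (Real.log t : ℂ) ^ l) =
        fun t : ℝ => (t : ℂ) ^ (α + 1 - 1) • (Real.log t ^ l • f t) := by
    funext t
    simp only [f, add_sub_cancel_right, Complex.real_smul, smul_eq_mul]
    push_cast
    ring
  have hGamma : (fun s : ℂ => Complex.Gamma s * (lam : ℂ) ^ (-s)) =ᶠ[𝓝 (α + 1)] mellin f :=
    eventually_of_mem ((isOpen_lt continuous_const Complex.continuous_re).mem_nhds hs.1)
      fun z hz => (mellin_cexp_neg_mul hlam hz).symm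
  refine ⟨hintegrand ▸ hf.mellinConvergent_log_pow_smul l hs, ?_⟩
  rw [congrFun (iteratedDeriv_comp_add_const l
      (fun s => Complex.Gamma s * (lam : ℂ) ^ (-s)) 1),
    hGamma.iteratedDeriv_eq, hf.iteratedDeriv_mellin l hs, mellin, hintegrand]
end

section
/- For every z ∈ ℂ with 0 < |z| < 1, ∏_{j=1}^n (z^{P/p_j} − z^{−P/p_j}) / (z^P − z^{−P})^{n−2} = Σ_{r=0}^∞ Σ_{ε ∈ {±1}^n} (−1)^n · binom(r + n − 3, r) · (∏_{j=1}^n ε_j) · z^{2Pr + P(n−2) + Σ_{j=1}^n ε_j P/p_j}, where each inner sum over ε is finite and the outer series over r converges absolutely (the denominator z^P − z^{−P} is nonzero for 0 < |z| < 1). -/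
/-!
With `w = z ^ (2P)` one has `z ^ P - z ^ (-P) = -z ^ (-P) (1 - w)` and `‖w‖ < 1`, so
`(z ^ P - z ^ (-P)) ^ (-(k + 1)) = (-1) ^ (k + 1) z ^ (P (k + 1)) (1 - w) ^ (-(k + 1))`,
and the negative binomial series `(1 - w) ^ (-(k + 1)) = ∑ r, C(r + k, k) w ^ r` converges
absolutely. Multiplying it by the numerator, expanded over sign vectors `ε ∈ {±1}ⁿ` as
`∏ j (z ^ Q j - z ^ (-Q j)) = ∑ ε (∏ j ε j) z ^ (∑ j ε j Q j)`, gives the series term by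
term. Here `k = n - 3`, and `Q j = P / p j` is the product of the other `p i`.
-/

open Finset

section Laurent

variable {K : Type*} [Field K] {z : K}

lemma Finset.prod_zpow_eq_zpow_sum₀ {ι : Type*} (s : Finset ι) (hz : z ≠ 0) (e : ι → ℤ) :
    ∏ j ∈ s, z ^ e j = z ^ ∑ j ∈ s, e j := by
  classical
  induction s using Finset.induction_on with
  | empty => simp
  | insert a s ha ih => rw [prod_insert ha, sum_insert ha, ih, zpow_add₀ hz]

lemma zpow_sub_zpow_neg_eq_mul (hz : z ≠ 0) (m : ℤ) :
    z ^ m - z ^ (-m) = -(z ^ m)⁻¹ * (1 - z ^ (2 * m)) := by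
  rw [zpow_neg, two_mul, zpow_add₀ hz]
  field_simp
  ring

variable {ι : Type*} [Fintype ι] [DecidableEq ι]

lemma prod_zpow_sub_zpow_neg_eq_sum_signs (hz : z ≠ 0) (Q : ι → ℤ) :
    ∏ j, (z ^ Q j - z ^ (-Q j)) =
      ∑ ε : ι → Bool, (∏ j, if ε j then (1 : K) else -1) *
        z ^ ∑ j, (if ε j then (1 : ℤ) else -1) * Q j := by
  have hfactor (j : ι) : z ^ Q j - z ^ (-Q j) =
      ∑ b : Bool, (if b then (1 : K) else -1) * z ^ ((if b then (1 : ℤ) else -1) * Q j) := by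
    simp [sub_eq_add_neg]
  simp_rw [hfactor, Fintype.prod_sum, prod_mul_distrib, prod_zpow_eq_zpow_sum₀ _ hz]

lemma sum_signs_mul_zpow_add_eq (hz : z ≠ 0) (Q : ι → ℤ) (c : K) (a : ℤ) :
    ∑ ε : ι → Bool, c * (∏ j, if ε j then (1 : K) else -1) *
        z ^ (a + ∑ j, (if ε j then (1 : ℤ) else -1) * Q j) =
      (∏ j, (z ^ Q j - z ^ (-Q j))) * (c * z ^ a) := by
  rw [prod_zpow_sub_zpow_neg_eq_sum_signs hz, sum_mul]
  refine sum_congr rfl fun ε _ => ?_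
  rw [zpow_add₀ hz]
  ring

end Laurent

section Normed

variable {𝕜 : Type*} [NormedField 𝕜] {z : 𝕜} {m : ℤ}

lemma norm_zpow_lt_one (hz0 : z ≠ 0) (hz1 : ‖z‖ < 1) (hm : 0 < m) : ‖z ^ m‖ < 1 := by
  rw [norm_zpow]
  exact zpow_lt_one₀ (norm_pos_iff.2 hz0) hz1 hm

lemma zpow_sub_zpow_neg_ne_zero (hz0 : z ≠ 0) (hz1 : ‖z‖ < 1) (hm : 0 < m) :
    z ^ m - z ^ (-m) ≠ 0 := by
  have hw : (1 : 𝕜) - z ^ (2 * m) ≠ 0 := fun h => by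
    simpa [← sub_eq_zero.mp h] using norm_zpow_lt_one hz0 hz1 (by positivity : 0 < 2 * m)
  rw [zpow_sub_zpow_neg_eq_mul hz0]
  exact mul_ne_zero (by simpa using zpow_ne_zero m hz0) hw

lemma summable_norm_choose_mul_geometric_of_norm_lt_one (k : ℕ) {w : 𝕜} (hw : ‖w‖ < 1) :
    Summable (fun r : ℕ => ‖((r + k).choose k : 𝕜) * w ^ r‖) := by
  refine .of_nonneg_of_le (fun _ => norm_nonneg _) (fun r => ?_)
    (summable_choose_mul_geometric_of_norm_lt_one k (r := ‖w‖) (by simpa using hw))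
  rw [norm_mul, norm_pow]
  gcongr
  simpa using Nat.norm_cast_le (α := 𝕜) _

lemma neg_one_pow_mul_choose_mul_zpow_eq (hz : z ≠ 0) (k r : ℕ) :
    (-1 : 𝕜) ^ (k + 1) * ((r + k).choose r : 𝕜) * z ^ (2 * m * r + m * ((k : ℤ) + 1)) =
      (-1) ^ (k + 1) * z ^ (m * ((k : ℤ) + 1)) * ((r + k).choose k * (z ^ (2 * m)) ^ r) := by
  rw [Nat.choose_symm_add, zpow_add₀ hz, ← zpow_natCast (z ^ (2 * m)), ← zpow_mul]
  ring

lemma inv_zpow_sub_zpow_neg_pow_eq (hz : z ≠ 0) (k : ℕ) :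
    ((z ^ m - z ^ (-m)) ^ (k + 1))⁻¹ =
      (-1) ^ (k + 1) * z ^ (m * ((k : ℤ) + 1)) * (1 / (1 - z ^ (2 * m)) ^ (k + 1)) := by
  have hk : (k : ℤ) + 1 = ((k + 1 : ℕ) : ℤ) := by push_cast; rfl
  rw [zpow_sub_zpow_neg_eq_mul hz, hk, zpow_mul z m, zpow_natCast]
  generalize (1 : 𝕜) - z ^ (2 * m) = u
  rw [← inv_pow, mul_inv, inv_neg, inv_inv]
  ring

theorem hasSum_inv_zpow_sub_zpow_neg_pow [CompleteSpace 𝕜] (hz0 : z ≠ 0) (hz1 : ‖z‖ < 1)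
    (hm : 0 < m) (k : ℕ) :
    HasSum (fun r : ℕ =>
        (-1 : 𝕜) ^ (k + 1) * ((r + k).choose r : 𝕜) * z ^ (2 * m * r + m * ((k : ℤ) + 1)))
      ((z ^ m - z ^ (-m)) ^ (k + 1))⁻¹ := by
  simp_rw [neg_one_pow_mul_choose_mul_zpow_eq hz0, inv_zpow_sub_zpow_neg_pow_eq hz0]
  exact (hasSum_choose_mul_geometric_of_norm_lt_one k
    (norm_zpow_lt_one hz0 hz1 (by positivity : 0 < 2 * m))).mul_left _

theorem summable_norm_neg_one_pow_mul_choose_mul_zpow (hz0 : z ≠ 0) (hz1 : ‖z‖ < 1)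
    (hm : 0 < m) (k : ℕ) :
    Summable (fun r : ℕ =>
      ‖(-1 : 𝕜) ^ (k + 1) * ((r + k).choose r : 𝕜) *
        z ^ (2 * m * r + m * ((k : ℤ) + 1))‖) := by
  simp_rw [neg_one_pow_mul_choose_mul_zpow_eq hz0, norm_mul (_ * _)]
  exact (summable_norm_choose_mul_geometric_of_norm_lt_one k
    (norm_zpow_lt_one hz0 hz1 (by positivity : 0 < 2 * m))).mul_left _

end Normed

theorem statement12_general (n : ℕ) (hn : 3 ≤ n) (p : Fin n → ℤ)
    (hp2 : ∀ j, 2 ≤ p j)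
    (z : ℂ) (hz0 : z ≠ 0) (hz1 : ‖z‖ < 1) :
    z ^ (∏ j, p j) - z ^ (-∏ j, p j) ≠ 0 ∧
    Summable (fun r : ℕ =>
      ‖∑ ε : Fin n → Bool,
        (-1 : ℂ) ^ n * ((r + (n - 3)).choose r : ℂ) *
          (∏ j, if ε j then (1 : ℂ) else -1) *
          z ^ (2 * (∏ j, p j) * (r : ℤ) + (∏ j, p j) * ((n : ℤ) - 2) +
            ∑ j, (if ε j then (1 : ℤ) else -1) * ∏ i ∈ Finset.univ.erase j, p i)‖) ∧
    HasSum (fun r : ℕ =>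
      ∑ ε : Fin n → Bool,
        (-1 : ℂ) ^ n * ((r + (n - 3)).choose r : ℂ) *
          (∏ j, if ε j then (1 : ℂ) else -1) *
          z ^ (2 * (∏ j, p j) * (r : ℤ) + (∏ j, p j) * ((n : ℤ) - 2) +
            ∑ j, (if ε j then (1 : ℤ) else -1) * ∏ i ∈ Finset.univ.erase j, p i))
      ((∏ j, (z ^ (∏ i ∈ Finset.univ.erase j, p i) - z ^ (-∏ i ∈ Finset.univ.erase j, p i))) /
        (z ^ (∏ j, p j) - z ^ (-∏ j, p j)) ^ (n - 2)) := by
  obtain ⟨k, rfl⟩ : ∃ k, n = k + 3 := ⟨n - 3, by omega⟩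
  have hP : 0 < ∏ j, p j := prod_pos fun j _ => by linarith [hp2 j]
  have hsign : (-1 : ℂ) ^ (k + 3) = (-1) ^ (k + 1) := by ring
  have hdeg : ((k + 3 : ℕ) : ℤ) - 2 = k + 1 := by push_cast; ring
  simp only [Nat.add_sub_cancel, hsign, hdeg, show k + 3 - 2 = k + 1 from rfl,
    sum_signs_mul_zpow_add_eq hz0]
  refine ⟨zpow_sub_zpow_neg_ne_zero hz0 hz1 hP,
    ((summable_norm_neg_one_pow_mul_choose_mul_zpow hz0 hz1 hP k).mul_left _).congr
      fun r => (norm_mul _ _).symm, ?_⟩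
  simpa only [div_eq_mul_inv] using
    (hasSum_inv_zpow_sub_zpow_neg_pow hz0 hz1 hP k).mul_left _

theorem statement12 (n : ℕ) (hn : 3 ≤ n) (p : Fin n → ℤ)
    (hp2 : ∀ j, 2 ≤ p j)
    (hpcop : ∀ i j : Fin n, i ≠ j → IsCoprime (p i) (p j))
    (z : ℂ) (hz0 : z ≠ 0) (hz1 : ‖z‖ < 1) :
    z ^ (∏ j, p j) - z ^ (-∏ j, p j) ≠ 0 ∧
    Summable (fun r : ℕ =>
      ‖∑ ε : Fin n → Bool,
        (-1 : ℂ) ^ n * ((r + (n - 3)).choose r : ℂ) *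
          (∏ j, if ε j then (1 : ℂ) else -1) *
          z ^ (2 * (∏ j, p j) * (r : ℤ) + (∏ j, p j) * ((n : ℤ) - 2) +
            ∑ j, (if ε j then (1 : ℤ) else -1) * ∏ i ∈ Finset.univ.erase j, p i)‖) ∧
    HasSum (fun r : ℕ =>
      ∑ ε : Fin n → Bool,
        (-1 : ℂ) ^ n * ((r + (n - 3)).choose r : ℂ) *
          (∏ j, if ε j then (1 : ℂ) else -1) *
          z ^ (2 * (∏ j, p j) * (r : ℤ) + (∏ j, p j) * ((n : ℤ) - 2) +
            ∑ j, (if ε j then (1 : ℤ) else -1) * ∏ i ∈ Finset.univ.erase j, p i))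
      ((∏ j, (z ^ (∏ i ∈ Finset.univ.erase j, p i) - z ^ (-∏ i ∈ Finset.univ.erase j, p i))) /
        (z ^ (∏ j, p j) - z ^ (-∏ j, p j)) ^ (n - 2)) :=
  statement12_general n hn p hp2 z hz0 hz1
end

section
/- For every m ∈ ℤ, the function y ↦ (∏_{j=1}^n sinh(y/(2 p_j))) / sinh(y/2)^{n−2}, restricted to a punctured neighborhood of 2πim, extends to a holomorphic function on a full neighborhood of 2πim if and only if p_j divides m for at least n − 2 of the indices j ∈ {1, …, n}. Equivalently, F has a pole at y = 2πim if and only if m is divisible by at most n − 3 of the p_j. -/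
/-!
The zeros of `sinh` are simple, since `cosh` does not vanish where `sinh` does, and
`sinh (2πim / (2c))` vanishes exactly when `c ∣ m`. Hence the meromorphic order of `F` at `2πim`
is `#{j | p j ∣ m} - (n - 2)`, and a meromorphic function extends holomorphically across a point
exactly when its order there is nonnegative.
-/

open Complex Filter Topology

namespace Complex

lemma cosh_ne_zero_of_sinh_eq_zero {z : ℂ} (h : sinh z = 0) : cosh z ≠ 0 := by
  intro hc
  simpa [h, hc] using cosh_sq_sub_sinh_sq z

lemma meromorphicOrderAt_sinh (z : ℂ) [Decidable (sinh z = 0)] :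
    meromorphicOrderAt sinh z = if sinh z = 0 then 1 else 0 := by
  rw [analyticAt_sinh.meromorphicOrderAt_eq]
  split_ifs with h
  · rw [analyticAt_sinh.analyticOrderAt_eq_one_of_zero_deriv_ne_zero h
      (by rw [deriv_sinh]; exact cosh_ne_zero_of_sinh_eq_zero h)]
    rfl
  · rw [analyticAt_sinh.analyticOrderAt_eq_zero.mpr h]
    rfl

lemma meromorphicOrderAt_sinh_div {c : ℂ} (hc : c ≠ 0) (z : ℂ) [Decidable (sinh (z / c) = 0)] :
    meromorphicOrderAt (fun y ↦ sinh (y / c)) z = if sinh (z / c) = 0 then 1 else 0 := by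
  rw [← meromorphicOrderAt_sinh]
  exact meromorphicOrderAt_comp_of_deriv_ne_zero (f := sinh) (g := (· / c)) (by fun_prop)
    (by simp [hc])

lemma sinh_two_pi_I_mul_div_eq_zero_iff {c : ℤ} (hc : c ≠ 0) (m : ℤ) :
    sinh (2 * Real.pi * I * m / (2 * c)) = 0 ↔ c ∣ m := by
  have hc' : (c : ℂ) ≠ 0 := Int.cast_ne_zero.mpr hc
  have hπ : (Real.pi : ℂ) ≠ 0 := ofReal_ne_zero.mpr Real.pi_ne_zero
  rw [show 2 * Real.pi * I * m / (2 * c) = (m / c * Real.pi : ℂ) * I by field_simp, sinh_mul_I,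
    mul_eq_zero, or_iff_left I_ne_zero, sin_eq_zero_iff]
  constructor
  · rintro ⟨k, hk⟩
    refine ⟨k, ?_⟩
    have : (m : ℂ) = c * k := by
      field_simp at hk
      linear_combination hk
    exact_mod_cast this
  · rintro ⟨k, rfl⟩
    exact ⟨k, by push_cast; field_simp⟩

end Complex

section Extension

variable {E : Type*} [NormedAddCommGroup E] [NormedSpace ℂ E] [CompleteSpace E]

lemma exists_differentiableOn_eq_nhdsNE_iff {f : ℂ → E} {x : ℂ} :
    (∃ (g : ℂ → E) (U : Set ℂ), IsOpen U ∧ x ∈ U ∧ DifferentiableOn ℂ g U ∧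
        ∀ y ∈ U, y ≠ x → g y = f y) ↔
      ∃ g : ℂ → E, AnalyticAt ℂ g x ∧ f =ᶠ[𝓝[≠] x] g := by
  constructor
  · rintro ⟨g, U, hUo, hxU, hg, hfg⟩
    refine ⟨g, hg.analyticAt (hUo.mem_nhds hxU), ?_⟩
    filter_upwards [inter_mem_nhdsWithin _ (hUo.mem_nhds hxU)] with y ⟨hyx, hyU⟩
    exact (hfg y hyU hyx).symm
  · rintro ⟨g, hg, hfg⟩
    obtain ⟨U, hU, hUo, hxU⟩ := eventually_nhds_iff.mp
      (hg.eventually_analyticAt.and (eventually_nhdsWithin_iff.mp hfg))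
    exact ⟨g, U, hUo, hxU, fun y hy ↦ (hU y hy).1.differentiableAt.differentiableWithinAt,
      fun y hy hyx ↦ ((hU y hy).2 hyx).symm⟩

theorem MeromorphicAt.meromorphicOrderAt_nonneg_iff_exists_differentiableOn {f : ℂ → E} {x : ℂ}
    (hf : MeromorphicAt f x) :
    0 ≤ meromorphicOrderAt f x ↔ ∃ (g : ℂ → E) (U : Set ℂ), IsOpen U ∧ x ∈ U ∧
      DifferentiableOn ℂ g U ∧ ∀ y ∈ U, y ≠ x → g y = f y :=
  hf.meromorphicOrderAt_nonneg_iff.trans exists_differentiableOn_eq_nhdsNE_iff.symm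

end Extension

open Finset in
lemma meromorphicOrderAt_prod_sinh_div_div_sinh_pow {ι : Type*} (s : Finset ι) {c : ι → ℂ}
    (hc : ∀ i, c i ≠ 0) {d : ℂ} (hd : d ≠ 0) (N : ℕ) {x : ℂ} (hx : sinh (x / d) = 0)
    [DecidablePred fun i ↦ sinh (x / c i) = 0] :
    meromorphicOrderAt (fun y ↦ (∏ i ∈ s, sinh (y / c i)) / sinh (y / d) ^ N) x =
      ((#{i ∈ s | sinh (x / c i) = 0} - N : ℤ) : WithTop ℤ) := by
  rw [fun_meromorphicOrderAt_div (by fun_prop) (by fun_prop),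
    meromorphicOrderAt_fun_prod (fun i _ ↦ by fun_prop), fun_meromorphicOrderAt_pow (by fun_prop)]
  simp [meromorphicOrderAt_sinh_div, hc, hd, hx, sum_boole]

theorem statement14_general (n : ℕ) (hn : 3 ≤ n) (p : Fin n → ℤ)
    (hp2 : ∀ j, 2 ≤ p j)
    (m : ℤ) :
    ((∃ (g : ℂ → ℂ) (U : Set ℂ), IsOpen U ∧ 2 * (Real.pi : ℂ) * Complex.I * (m : ℂ) ∈ U ∧
        DifferentiableOn ℂ g U ∧
        ∀ y ∈ U, y ≠ 2 * (Real.pi : ℂ) * Complex.I * (m : ℂ) →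
          g y = (∏ j, Complex.sinh (y / (2 * (p j : ℂ)))) / Complex.sinh (y / 2) ^ (n - 2)) ↔
      n - 2 ≤ Set.ncard {j : Fin n | p j ∣ m}) ∧
    (¬ (∃ (g : ℂ → ℂ) (U : Set ℂ), IsOpen U ∧ 2 * (Real.pi : ℂ) * Complex.I * (m : ℂ) ∈ U ∧
        DifferentiableOn ℂ g U ∧
        ∀ y ∈ U, y ≠ 2 * (Real.pi : ℂ) * Complex.I * (m : ℂ) →
          g y = (∏ j, Complex.sinh (y / (2 * (p j : ℂ)))) / Complex.sinh (y / 2) ^ (n - 2)) ↔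
      Set.ncard {j : Fin n | p j ∣ m} ≤ n - 3) := by
  classical
  have hp : ∀ j, p j ≠ 0 := fun j ↦ by have := hp2 j; omega
  have hzero : ∀ j, sinh (2 * Real.pi * I * m / (2 * p j)) = 0 ↔ p j ∣ m := fun j ↦
    sinh_two_pi_I_mul_div_eq_zero_iff (hp j) m
  have hpole : sinh (2 * Real.pi * I * m / 2) = 0 := by
    simpa using (sinh_two_pi_I_mul_div_eq_zero_iff one_ne_zero m).mpr (one_dvd m)
  have hextend := (MeromorphicAt.meromorphicOrderAt_nonneg_iff_exists_differentiableOn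
    (f := fun y ↦ (∏ j, sinh (y / (2 * (p j : ℂ)))) / sinh (y / 2) ^ (n - 2))
    (x := 2 * Real.pi * I * m) (by fun_prop)).symm
  rw [meromorphicOrderAt_prod_sinh_div_div_sinh_pow _
    (fun j ↦ mul_ne_zero two_ne_zero (Int.cast_ne_zero.mpr (hp j))) two_ne_zero _ hpole] at hextend
  simp only [hzero, WithTop.coe_nonneg, sub_nonneg] at hextend
  rw [hextend, Set.ncard_eq_toFinset_card', Set.toFinset_ofPred]
  omega

theorem statement14 (n : ℕ) (hn : 3 ≤ n) (p : Fin n → ℤ)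
    (hp2 : ∀ j, 2 ≤ p j)
    (hpcop : ∀ i j : Fin n, i ≠ j → IsCoprime (p i) (p j))
    (m : ℤ) :
    ((∃ (g : ℂ → ℂ) (U : Set ℂ), IsOpen U ∧ 2 * (Real.pi : ℂ) * Complex.I * (m : ℂ) ∈ U ∧
        DifferentiableOn ℂ g U ∧
        ∀ y ∈ U, y ≠ 2 * (Real.pi : ℂ) * Complex.I * (m : ℂ) →
          g y = (∏ j, Complex.sinh (y / (2 * (p j : ℂ)))) / Complex.sinh (y / 2) ^ (n - 2)) ↔
      n - 2 ≤ Set.ncard {j : Fin n | p j ∣ m}) ∧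
    (¬ (∃ (g : ℂ → ℂ) (U : Set ℂ), IsOpen U ∧ 2 * (Real.pi : ℂ) * Complex.I * (m : ℂ) ∈ U ∧
        DifferentiableOn ℂ g U ∧
        ∀ y ∈ U, y ≠ 2 * (Real.pi : ℂ) * Complex.I * (m : ℂ) →
          g y = (∏ j, Complex.sinh (y / (2 * (p j : ℂ)))) / Complex.sinh (y / 2) ^ (n - 2)) ↔
      Set.ncard {j : Fin n | p j ∣ m} ≤ n - 3) :=
  statement14_general n hn p hp2 m
end
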